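/- Eigenfunction property of generalized Meixner polynomials under the intertwining kernel: let 𝕀_φ f(n) = E[f(B(n, I))] where I is a [0,∞)-valued random variable with moments E[I^k] = σ₁^k k!/W_φ(k+1) and B(n, p) denotes a Binomial(n, p) random variable. Then 𝕀_φ p_k(n) = (σ₁^k k!/W_φ(k+1)) p_k(n) for all k, n ∈ ℤ≥0. -/

import Mathlib

open MeasureTheory

/-- The discrete dilation (binomial thinning) operator. -/
noncomputable def DD (α : ℝ) (f : ℕ → ℝ) (n : ℕ) : ℝ :=
  ∑ r ∈ Finset.range (n + 1), (n.choose r : ℝ) * α ^ r * (1 - α) ^ (n - r) * f r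

/-- The falling factorial `p_k(n) = n!/(n-k)!` (zero if `k > n`). -/
def pfall (k n : ℕ) : ℝ := (n.descFactorial k : ℝ)

/-! Each falling factorial `p_k` is an eigenfunction of every thinning `DD x`, with eigenvalue
`x ^ k`: by `choose n r * p_k(r) = p_k(n) * choose (n - k) (r - k)`, the thinned sum becomes
`x ^ k * p_k(n)` times the binomial expansion of `(x + (1 - x)) ^ (n - k) = 1`. Integrating in `x`
against `μ` then turns `x ^ k` into the `k`-th moment. -/

open Finset

theorem Nat.choose_mul_descFactorial {n k r : ℕ} (hkr : k ≤ r) :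
    n.choose r * r.descFactorial k = n.descFactorial k * (n - k).choose (r - k) :=
  calc n.choose r * r.descFactorial k = k.factorial * (n.choose r * r.choose k) := by
        rw [Nat.descFactorial_eq_factorial_mul_choose]; ring
    _ = k.factorial * (n.choose k * (n - k).choose (r - k)) := by rw [Nat.choose_mul hkr]
    _ = n.descFactorial k * (n - k).choose (r - k) := by
        rw [Nat.descFactorial_eq_factorial_mul_choose]; ring

theorem sum_choose_mul_pow_mul_descFactorial {R : Type*} [CommSemiring R] (x y : R) (n k : ℕ) :
    ∑ r ∈ range (n + 1), (n.choose r : R) * x ^ r * y ^ (n - r) * r.descFactorial k =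
      x ^ k * (x + y) ^ (n - k) * n.descFactorial k := by
  rcases le_or_gt k n with hkn | hnk
  · obtain ⟨m, rfl⟩ := Nat.exists_eq_add_of_le hkn
    have h_below : ∀ r ∈ range k,
        ((k + m).choose r : R) * x ^ r * y ^ (k + m - r) * r.descFactorial k = 0 := by
      intro r hr
      simp [Nat.descFactorial_eq_zero_iff_lt.mpr (mem_range.mp hr)]
    have h_above : ∀ j ∈ range (m + 1),
        ((k + m).choose (k + j) : R) * x ^ (k + j) * y ^ (k + m - (k + j)) *
            (k + j).descFactorial k =
          (k + m).descFactorial k * x ^ k * (x ^ j * y ^ (m - j) * m.choose j) := by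
      intro j _
      have h := Nat.choose_mul_descFactorial (n := k + m) (Nat.le_add_right k j)
      simp only [Nat.add_sub_cancel_left, Nat.add_sub_add_left] at h ⊢
      calc _ = (((k + m).choose (k + j) * (k + j).descFactorial k : ℕ) : R) *
              (x ^ k * x ^ j * y ^ (m - j)) := by push_cast; ring
        _ = _ := by rw [h]; push_cast; ring
    rw [add_assoc, sum_range_add, sum_eq_zero h_below, zero_add, sum_congr rfl h_above,
      ← mul_sum, ← add_pow, Nat.add_sub_cancel_left]
    ring
  · rw [Nat.descFactorial_eq_zero_iff_lt.mpr hnk, Nat.cast_zero, mul_zero]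
    refine sum_eq_zero fun r hr => ?_
    rw [Nat.descFactorial_eq_zero_iff_lt.mpr (by grind), Nat.cast_zero, mul_zero]

theorem DD_pfall (x : ℝ) (k n : ℕ) : DD x (pfall k) n = x ^ k * pfall k n := by
  simp only [DD, pfall, sum_choose_mul_pow_mul_descFactorial, add_sub_cancel, one_pow, mul_one]

theorem intertwining_kernel_eigen_general (φ : ℕ → ℝ) (σ1 : ℝ)
    (μ : Measure ℝ)
    (hmom : ∀ k : ℕ,
      ∫ x, x ^ k ∂μ =
        σ1 ^ k * (k.factorial : ℝ) / ∏ r ∈ Finset.range k, φ (r + 1)) :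
    ∀ k n : ℕ,
      ∫ x, DD x (pfall k) n ∂μ =
        (σ1 ^ k * (k.factorial : ℝ) / ∏ r ∈ Finset.range k, φ (r + 1)) *
          pfall k n := by
  intro k n
  simp only [DD_pfall, integral_mul_const, hmom]

/-- Eigenfunction property of the intertwining kernel: let `𝕀_φ f(n) = E[f(B(n, I))]`
where `I` is a `[0,∞)`-valued random variable with moments
`E[I^k] = σ₁^k k!/W_φ(k+1)`. Then `𝕀_φ p_k = (σ₁^k k!/W_φ(k+1)) p_k`. -/
theorem intertwining_kernel_eigen (φ : ℕ → ℝ) (σ1 : ℝ)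
    (μ : Measure ℝ) [IsProbabilityMeasure μ]
    (hsupp : ∀ᵐ x ∂μ, 0 ≤ x)
    (hint : ∀ k : ℕ, Integrable (fun x => x ^ k) μ)
    (hmom : ∀ k : ℕ,
      ∫ x, x ^ k ∂μ =
        σ1 ^ k * (k.factorial : ℝ) / ∏ r ∈ Finset.range k, φ (r + 1)) :
    ∀ k n : ℕ,
      ∫ x, DD x (pfall k) n ∂μ =
        (σ1 ^ k * (k.factorial : ℝ) / ∏ r ∈ Finset.range k, φ (r + 1)) *
          pfall k n :=
  intertwining_kernel_eigen_general φ σ1 μ hmom
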